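/- Let X be a separable LOTS, F the cdf of a probability Borel measure μ, F_- its left version, and G its pseudo-inverse with domain A ⊆ [0,1]. Then for a < b in X, the intersection of G^{-1}((a,b)) with A lies between the sets (F(a), F_-(b)) ∩ A and (F(a), F_-(b)] ∩ A; in particular (F(a), F_-(b)) ∩ A ⊆ G^{-1}((a,b)) ⊆ (F(a), F_-(b)] ∩ A. -/

import Mathlib

/-!
Write `F y = μ (Iic y)`. Both inclusions follow from two continuity properties of `F`:
`μ (Iio b) = ⨆ y < b, F y`, and `r ≤ F (G r)`, i.e. the infimum defining `G r` is attained.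
Each is continuity of `μ` along the monotone family of sets `Iic y`, with `y` ranging over a
possibly uncountable set; in a separable order topology every set has a countable cofinal subset,
so countable additivity applies.
-/

open MeasureTheory Set

section SeparableOrder

variable {X : Type*} [LinearOrder X] [TopologicalSpace X] [OrderTopology X]
  [TopologicalSpace.SeparableSpace X]

theorem exists_countable_cofinal_subset (s : Set X) :
    ∃ t ⊆ s, t.Countable ∧ ∀ y ∈ s, ∃ z ∈ t, y ≤ z := by
  by_cases hmax : ∃ m ∈ s, ∀ y ∈ s, y ≤ m
  · obtain ⟨m, hm, hle⟩ := hmax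
    exact ⟨{m}, singleton_subset_iff.2 hm, countable_singleton m,
      fun y hy => ⟨m, rfl, hle y hy⟩⟩
  push Not at hmax
  obtain ⟨D, hDc, hDd⟩ := TopologicalSpace.exists_countable_dense X
  set D' := {d ∈ D | ∃ y ∈ s, d < y}
  choose! f hfs hlt using fun d (hd : d ∈ D') => hd.2
  refine ⟨f '' D', image_subset_iff.2 hfs, (hDc.mono (sep_subset _ _)).image f, fun y hy => ?_⟩
  -- `y` may have an immediate successor in `s`, so go two steps up to find room for `D`.
  obtain ⟨y', hy', hyy'⟩ := hmax y hy
  obtain ⟨y'', hy'', hy'y''⟩ := hmax y' hy'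
  obtain ⟨d, hdD, hyd, hdy''⟩ := hDd.exists_mem_open isOpen_Ioo ⟨y', hyy', hy'y''⟩
  have hd : d ∈ D' := ⟨hdD, y'', hy'', hdy''⟩
  exact ⟨f d, mem_image_of_mem f hd, (hyd.trans (hlt d hd)).le⟩

theorem exists_countable_coinitial_subset (s : Set X) :
    ∃ t ⊆ s, t.Countable ∧ ∀ y ∈ s, ∃ z ∈ t, z ≤ y :=
  exists_countable_cofinal_subset (X := Xᵒᵈ) s

variable [MeasurableSpace X] (μ : Measure X)

theorem measure_Iio_eq_iSup_measure_Iic (b : X) : μ (Iio b) = ⨆ y < b, μ (Iic y) := by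
  obtain ⟨t, htb, htc, hcof⟩ := exists_countable_cofinal_subset (Iio b)
  have hIio : Iio b = ⋃ y ∈ t, Iic y := by
    ext x
    simp only [mem_iUnion, mem_Iic, exists_prop]
    exact ⟨hcof x, fun ⟨z, hz, hxz⟩ => hxz.trans_lt (htb hz)⟩
  have hdir : DirectedOn (Function.onFun (· ⊆ ·) Iic) t := fun y hy z hz => by
    rcases le_total y z with h | h
    exacts [⟨z, hz, Iic_subset_Iic.2 h, subset_rfl⟩, ⟨y, hy, subset_rfl, Iic_subset_Iic.2 h⟩]
  refine le_antisymm ?_ (iSup₂_le fun y hy => measure_mono (Iic_subset_Iio.2 hy))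
  rw [hIio, measure_biUnion_eq_iSup htc hdir]
  exact biSup_mono fun y hy => htb hy

theorem measure_Iic_eq_iInf_of_isGLB [OpensMeasurableSpace X] [IsFiniteMeasure μ]
    {s : Set X} {a : X} (hs : s.Nonempty) (ha : IsGLB s a) : μ (Iic a) = ⨅ y ∈ s, μ (Iic y) := by
  obtain ⟨t, hts, htc, hcoinit⟩ := exists_countable_coinitial_subset s
  have hIic : Iic a = ⋂ z : t, Iic (z : X) := by
    ext x
    simp only [mem_Iic, mem_iInter, Subtype.forall]
    refine ⟨fun hxa z hz => hxa.trans (ha.1 (hts hz)), fun hx => ha.2 fun y hy => ?_⟩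
    obtain ⟨z, hz, hzy⟩ := hcoinit y hy
    exact (hx z hz).trans hzy
  have : Countable t := htc.to_subtype
  obtain ⟨y, hy⟩ := hs
  obtain ⟨z, hz, -⟩ := hcoinit y hy
  have hdir : Directed (· ⊇ ·) fun z : t => Iic (z : X) := fun y z => by
    rcases le_total (y : X) z with h | h
    exacts [⟨y, subset_rfl, Iic_subset_Iic.2 h⟩, ⟨z, Iic_subset_Iic.2 h, subset_rfl⟩]
  refine le_antisymm (le_iInf₂ fun y hy => measure_mono (Iic_subset_Iic.2 (ha.1 hy))) ?_
  rw [hIic, hdir.measure_iInter (fun _ => measurableSet_Iic.nullMeasurableSet)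
    ⟨⟨z, hz⟩, measure_ne_top μ _⟩, iInf_subtype'' t fun y => μ (Iic y)]
  exact biInf_mono fun y hy => hts hy

variable [IsFiniteMeasure μ]

theorem exists_lt_measureReal_Iic_of_lt_measureReal_Iio {b : X} {r : ℝ} (hr : 0 ≤ r)
    (h : r < μ.real (Iio b)) : ∃ y < b, r < μ.real (Iic y) := by
  rw [measureReal_def, ← ENNReal.ofReal_lt_iff_lt_toReal hr (measure_ne_top μ _),
    measure_Iio_eq_iSup_measure_Iic] at h
  simp only [lt_iSup_iff] at h
  obtain ⟨y, hyb, hry⟩ := h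
  exact ⟨y, hyb, (ENNReal.ofReal_lt_iff_lt_toReal hr (measure_ne_top μ _)).1 hry⟩

theorem le_measureReal_Iic_of_isGLB [OpensMeasurableSpace X] {s : Set X} {a : X} {r : ℝ}
    (hs : s.Nonempty) (ha : IsGLB s a) (h : ∀ y ∈ s, r ≤ μ.real (Iic y)) :
    r ≤ μ.real (Iic a) := by
  rw [measureReal_def, ← ENNReal.ofReal_le_iff_le_toReal (measure_ne_top μ _),
    measure_Iic_eq_iInf_of_isGLB μ hs ha]
  exact le_iInf₂ fun y hy => (ENNReal.ofReal_le_iff_le_toReal (measure_ne_top μ _)).2 (h y hy)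

end SeparableOrder

theorem stmt18_general {X : Type*} [LinearOrder X] [TopologicalSpace X] [OrderTopology X]
    [TopologicalSpace.SeparableSpace X] [MeasurableSpace X] [BorelSpace X]
    (μ : Measure X) [IsProbabilityMeasure μ]
    (A : Set ℝ)
    (G : ℝ → X)
    (hG : ∀ r ∈ A, IsGLB {y : X | r ≤ (μ (Set.Iic y)).toReal} (G r))
    (a b : X) :
    Set.Ioo ((μ (Set.Iic a)).toReal) ((μ (Set.Iio b)).toReal) ∩ A ⊆
        G ⁻¹' (Set.Ioo a b) ∩ A ∧
      G ⁻¹' (Set.Ioo a b) ∩ A ⊆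
        Set.Ioc ((μ (Set.Iic a)).toReal) ((μ (Set.Iio b)).toReal) ∩ A := by
  simp only [← measureReal_def] at hG ⊢
  constructor
  · rintro r ⟨⟨har, hrb⟩, hrA⟩
    obtain ⟨y, hyb, hry⟩ :=
      exists_lt_measureReal_Iic_of_lt_measureReal_Iio μ (measureReal_nonneg.trans har.le) hrb
    have hGr_le : r ≤ μ.real (Iic (G r)) :=
      le_measureReal_Iic_of_isGLB μ ⟨y, hry.le⟩ (hG r hrA) fun _ hz => hz
    refine ⟨⟨lt_of_not_ge fun hGa => ?_, ((hG r hrA).1 hry.le).trans_lt hyb⟩, hrA⟩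
    exact har.not_ge (hGr_le.trans (measureReal_mono (Iic_subset_Iic.2 hGa)))
  · rintro r ⟨⟨haG, hGb⟩, hrA⟩
    refine ⟨⟨lt_of_not_ge fun hra => haG.not_ge ((hG r hrA).1 hra), ?_⟩, hrA⟩
    refine le_of_not_gt fun hbr => hGb.not_ge ((hG r hrA).2 fun y hy => ?_)
    exact le_of_not_gt fun hyb => hbr.not_ge (hy.trans (measureReal_mono (Iic_subset_Iio.2 hyb)))

theorem stmt18 {X : Type*} [LinearOrder X] [TopologicalSpace X] [OrderTopology X]
    [TopologicalSpace.SeparableSpace X] [MeasurableSpace X] [BorelSpace X]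
    (μ : Measure X) [IsProbabilityMeasure μ]
    (A : Set ℝ)
    (hA : A = {r ∈ Set.Icc (0 : ℝ) 1 |
      ∃ g : X, IsGLB {y : X | r ≤ (μ (Set.Iic y)).toReal} g})
    (G : ℝ → X)
    (hG : ∀ r ∈ A, IsGLB {y : X | r ≤ (μ (Set.Iic y)).toReal} (G r))
    (a b : X) (hab : a < b) :
    Set.Ioo ((μ (Set.Iic a)).toReal) ((μ (Set.Iio b)).toReal) ∩ A ⊆
        G ⁻¹' (Set.Ioo a b) ∩ A ∧
      G ⁻¹' (Set.Ioo a b) ∩ A ⊆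
        Set.Ioc ((μ (Set.Iic a)).toReal) ((μ (Set.Iio b)).toReal) ∩ A :=
  stmt18_general μ A G hG a b
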